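/- Let a₁,…,a_n be distinct reals (n ≥ 1), ε₁,…,ε_n ∈ {-1,1}, Δᵢ(a) = εᵢ(a-aᵢ), let I ⊆ ℝ be an open interval on which Δᵢ > 0 for all i, let ξᵢ ∈ ℝ, and let x(a) = ∑_{i=1}^n ξᵢ Δᵢ(a)^{-1/2}; assume x′(a) ≠ 0 on I. On the open set U = { (a, y, p_a, p_y) ∈ ℝ⁴ : a ∈ I } define Π = a p_a / x′(a), H = Π² + a p_y², G = ∑_{k=0}^{n} (-1)^k σ_k H^{n-k} p_y^{2k}, Q₁ = ∑_{k=1}^{n} b̃_k(a) H^{n-k} Π p_y^{2k-1} with b̃_k(a) = (-1)^k ∑_i (ξᵢ/Δᵢ(a)^{1/2}) σ^i_{k-1}, Q₂ = ∑_{k=1}^{n} c̃_k(a) H^{n-k} p_y^{2k} with c̃_k(a) = ((-1)^{k+1}/2)[ ∑_i (ξᵢ²/Δᵢ(a)) σ^i_{k-1} + ∑_{i≠j} (ξᵢξ_j/(Δᵢ(a)Δ_j(a))^{1/2})(σ^{ij}_{k-1} + a σ^{ij}_{k-2}) ], S₁ = Q₁ + y G, and S₂ = Q₂ + y Q₁ +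 (y²/2) G. Then {H, p_y} = 0, {H, S₁} = 0 and {H, S₂} = 0 everywhere on U. -/

import Mathlib

open Polynomial

/-- For a polynomial `Q` of degree `d` written as `Q(X) = ∑_{k=0}^{d} (-1)^k σ_k X^{d-k}`,
`sig d Q k` is the coefficient `σ_k`, extended by `0` outside `0 ≤ k ≤ d`. -/
noncomputable def sig (d : ℕ) (Q : Polynomial ℝ) (k : ℤ) : ℝ :=
  if 0 ≤ k ∧ k ≤ (d : ℤ) then (-1 : ℝ) ^ k * Q.coeff (d - k.toNat) else 0

/-- `σ_k` for `P(X) = ∏ᵢ (X-aᵢ) = ∑_{k=0}^{n} (-1)^k σ_k X^{n-k}`. -/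
noncomputable def sigma (n : ℕ) (a : Fin n → ℝ) (k : ℤ) : ℝ :=
  sig n (∏ i, (X - C (a i))) k

/-- `σ^i_k` defined by `P(X)/(X-aᵢ) = ∑_{k=0}^{n-1} (-1)^k σ^i_k X^{n-1-k}`,
with `σ^i_{-1} = σ^i_n = 0`. -/
noncomputable def sigmaI (n : ℕ) (a : Fin n → ℝ) (i : Fin n) (k : ℤ) : ℝ :=
  sig (n - 1) (∏ j ∈ Finset.univ.erase i, (X - C (a j))) k

/-- `σ^{ij}_k` (for `i ≠ j`) defined by
`P(X)/((X-aᵢ)(X-a_j)) = ∑_{k=0}^{n-2} (-1)^k σ^{ij}_k X^{n-2-k}`,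
with `σ^{ij}_{-2} = σ^{ij}_{-1} = σ^{ij}_{n-1} = σ^{ij}_n = 0`. -/
noncomputable def sigmaIJ (n : ℕ) (a : Fin n → ℝ) (i j : Fin n) (k : ℤ) : ℝ :=
  sig (n - 2) (∏ l ∈ (Finset.univ.erase i).erase j, (X - C (a l))) k

/-- The canonical Poisson bracket of two functions of `(a, y, p_a, p_y) ∈ ℝ⁴`:
`{f,g} = f_a g_{p_a} + f_y g_{p_y} − f_{p_a} g_a − f_{p_y} g_y`. -/
noncomputable def pb (f g : ℝ → ℝ → ℝ → ℝ → ℝ) (A y pa py : ℝ) : ℝ :=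
  deriv (fun t => f t y pa py) A * deriv (fun t => g A y t py) pa +
    deriv (fun t => f A t pa py) y * deriv (fun t => g A y pa t) py -
    deriv (fun t => f A y t py) pa * deriv (fun t => g t y pa py) A -
    deriv (fun t => f A y pa t) py * deriv (fun t => g A t pa py) y

/-- `x(a) = ∑ᵢ ξᵢ (εᵢ(a-aᵢ))^{-1/2}`. -/
noncomputable def xfun (n : ℕ) (a ε ξ : Fin n → ℝ) (t : ℝ) : ℝ :=
  ∑ i, ξ i * (ε i * (t - a i)) ^ (-(1/2) : ℝ)

/-- `Π = a p_a / x′(a)`. -/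
noncomputable def PiF (n : ℕ) (a ε ξ : Fin n → ℝ) : ℝ → ℝ → ℝ → ℝ → ℝ :=
  fun A _y pa _py => A * pa / deriv (xfun n a ε ξ) A

/-- The hamiltonian `H = Π² + a p_y²`. -/
noncomputable def HF (n : ℕ) (a ε ξ : Fin n → ℝ) : ℝ → ℝ → ℝ → ℝ → ℝ :=
  fun A y pa py => (PiF n a ε ξ A y pa py) ^ 2 + A * py ^ 2

/-- `G = ∑_{k=0}^{n} (-1)^k σ_k H^{n-k} p_y^{2k}`. -/
noncomputable def GF (n : ℕ) (a ε ξ : Fin n → ℝ) : ℝ → ℝ → ℝ → ℝ → ℝ :=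
  fun A y pa py =>
    ∑ k ∈ Finset.range (n + 1),
      (-1 : ℝ) ^ k * sigma n a (k : ℤ) * (HF n a ε ξ A y pa py) ^ (n - k) * py ^ (2 * k)

/-- The coefficient `b̃_k(a) = (-1)^k ∑ᵢ (ξᵢ/Δᵢ(a)^{1/2}) σ^i_{k-1}`. -/
noncomputable def btilc (n : ℕ) (a ε ξ : Fin n → ℝ) (k : ℕ) (A : ℝ) : ℝ :=
  (-1 : ℝ) ^ k * ∑ i, ξ i / (ε i * (A - a i)) ^ ((1/2) : ℝ) * sigmaI n a i ((k : ℤ) - 1)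

/-- `Q₁ = ∑_{k=1}^{n} b̃_k H^{n-k} Π p_y^{2k-1}`. -/
noncomputable def Q1F (n : ℕ) (a ε ξ : Fin n → ℝ) : ℝ → ℝ → ℝ → ℝ → ℝ :=
  fun A y pa py =>
    ∑ k ∈ Finset.Icc 1 n,
      btilc n a ε ξ k A * (HF n a ε ξ A y pa py) ^ (n - k) * PiF n a ε ξ A y pa py *
        py ^ (2 * k - 1)

/-- The coefficient `c̃_k(a) = ((-1)^{k+1}/2)[ ∑ᵢ (ξᵢ²/Δᵢ) σ^i_{k-1}
+ ∑_{i≠j} (ξᵢξ_j/(ΔᵢΔ_j)^{1/2})(σ^{ij}_{k-1} + a σ^{ij}_{k-2}) ]`. -/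
noncomputable def ctilc (n : ℕ) (a ε ξ : Fin n → ℝ) (k : ℕ) (A : ℝ) : ℝ :=
  ((-1 : ℝ) ^ (k + 1) / 2) *
    ((∑ i, ξ i ^ 2 / (ε i * (A - a i)) * sigmaI n a i ((k : ℤ) - 1)) +
      ∑ i, ∑ j ∈ Finset.univ.erase i,
        ξ i * ξ j / ((ε i * (A - a i)) * (ε j * (A - a j))) ^ ((1/2) : ℝ) *
          (sigmaIJ n a i j ((k : ℤ) - 1) + A * sigmaIJ n a i j ((k : ℤ) - 2)))

/-- `Q₂ = ∑_{k=1}^{n} c̃_k H^{n-k} p_y^{2k}`. -/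
noncomputable def Q2F (n : ℕ) (a ε ξ : Fin n → ℝ) : ℝ → ℝ → ℝ → ℝ → ℝ :=
  fun A y pa py =>
    ∑ k ∈ Finset.Icc 1 n,
      ctilc n a ε ξ k A * (HF n a ε ξ A y pa py) ^ (n - k) * py ^ (2 * k)

/-- `S₁ = Q₁ + y G`. -/
noncomputable def S1F (n : ℕ) (a ε ξ : Fin n → ℝ) : ℝ → ℝ → ℝ → ℝ → ℝ :=
  fun A y pa py => Q1F n a ε ξ A y pa py + y * GF n a ε ξ A y pa py

/-- `S₂ = Q₂ + y Q₁ + (y²/2) G`. -/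
noncomputable def S2F (n : ℕ) (a ε ξ : Fin n → ℝ) : ℝ → ℝ → ℝ → ℝ → ℝ :=
  fun A y pa py =>
    Q2F n a ε ξ A y pa py + y * Q1F n a ε ξ A y pa py + y ^ 2 / 2 * GF n a ε ξ A y pa py

/-!
`{H, ·}` is a derivation, and on the generators it acts by `{H, f(a)} = -2 Π a f'(a) / x'(a)`,
`{H, Π} = a p_y² / x'(a)`, `{H, y} = -2 a p_y` and `{H, H} = {H, p_y} = 0` (the `∂Π/∂a`-terms
cancel). So `{H, G} = 0`, while `{H, Q₁} = 2 a p_y G` reduces, after telescoping in `k`, to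
`b̃_k + 2 a b̃'_k - 2 b̃'_{k+1} = 2 x' (-1)^k σ_k`, and `{H, Q₂} = 2 a p_y Q₁` reduces to
`c̃'_k = -x' b̃_k`. Both identities follow from `σ_k = σ^i_k + aᵢ σ^i_{k-1}`,
`σ^i_k = σ^{ij}_k + a_j σ^{ij}_{k-1}` and `Δᵢ^{-1/2} = 2 (aᵢ - a) (Δᵢ^{-1/2})'`. Finally
`{H, S₁} = {H, Q₁} - 2 a p_y G = 0` and `{H, S₂} = {H, Q₂} - 2 a p_y Q₁ + y {H, S₁} = 0`.
-/

open Finset Filter Topology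

lemma sig_of_neg {d : ℕ} {Q : ℝ[X]} {k : ℤ} (hk : k < 0) : sig d Q k = 0 :=
  if_neg (by omega)

lemma sig_of_lt {d : ℕ} {Q : ℝ[X]} {k : ℤ} (hk : (d : ℤ) < k) : sig d Q k = 0 :=
  if_neg (by omega)

lemma sig_natCast {d : ℕ} {Q : ℝ[X]} {j : ℕ} (hj : j ≤ d) :
    sig d Q j = (-1) ^ j * Q.coeff (d - j) := by
  rw [sig, if_pos ⟨by positivity, by exact_mod_cast hj⟩, Int.toNat_natCast, zpow_natCast]

lemma sig_X_sub_C_mul {e : ℕ} {R : ℝ[X]} (hR : R.natDegree ≤ e) (b : ℝ) (k : ℤ) :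
    sig (e + 1) ((X - C b) * R) k = sig e R k + b * sig e R (k - 1) := by
  rcases lt_or_ge k 0 with hk | hk
  · rw [sig_of_neg hk, sig_of_neg hk, sig_of_neg (by omega), mul_zero, add_zero]
  rcases lt_or_ge ((e : ℤ) + 1) k with hk' | hk'
  · rw [sig_of_lt (by exact_mod_cast hk'), sig_of_lt (by omega), sig_of_lt (by omega), mul_zero,
      add_zero]
  lift k to ℕ using hk
  rw [mul_comm, sig_natCast (by omega)]
  rcases k with _ | j
  · rw [Nat.sub_zero, coeff_mul_X_sub_C, coeff_eq_zero_of_natDegree_lt (n := e + 1) (by omega),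
      sig_natCast (Nat.zero_le e), Nat.sub_zero, Nat.cast_zero, zero_sub,
      sig_of_neg (by norm_num)]
    ring
  rw [Nat.cast_succ, add_sub_cancel_right, sig_natCast (show j ≤ e by omega)]
  rcases Nat.lt_or_ge j e with hj | hj
  · rw [show e + 1 - (j + 1) = (e - (j + 1)) + 1 by omega, coeff_mul_X_sub_C,
      show e - (j + 1) + 1 = e - j by omega, ← Nat.cast_succ, sig_natCast hj, pow_succ]
    ring
  · obtain rfl : j = e := by omega
    rw [Nat.sub_self, Nat.sub_self, mul_coeff_zero, ← Nat.cast_succ, sig_of_lt (by omega)]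
    simp only [coeff_sub, coeff_X_zero, coeff_C_zero, pow_succ]
    ring

section Sigma

variable {n : ℕ} (a : Fin n → ℝ)

lemma sigma_eq_sigmaI_add (i : Fin n) (k : ℤ) :
    sigma n a k = sigmaI n a i k + a i * sigmaI n a i (k - 1) := by
  obtain ⟨m, rfl⟩ : ∃ m, n = m + 1 := ⟨n - 1, by have := i.2; omega⟩
  rw [sigma, sigmaI, ← mul_prod_erase _ _ (mem_univ i)]
  exact sig_X_sub_C_mul (by simp) _ k

lemma sigmaI_eq_sigmaIJ_add {i j : Fin n} (hji : j ≠ i) (k : ℤ) :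
    sigmaI n a i k = sigmaIJ n a i j k + a j * sigmaIJ n a i j (k - 1) := by
  obtain ⟨m, rfl⟩ : ∃ m, n = m + 2 := ⟨n - 2, by have := i.2; have := j.2; omega⟩
  have hj : j ∈ univ.erase i := mem_erase.2 ⟨hji, mem_univ j⟩
  rw [sigmaI, sigmaIJ, ← mul_prod_erase _ _ hj]
  exact sig_X_sub_C_mul (by simp [card_erase_of_mem hj]) _ k

lemma sigmaIJ_comm (i j : Fin n) (k : ℤ) : sigmaIJ n a i j k = sigmaIJ n a j i k := by
  rw [sigmaIJ, sigmaIJ, erase_right_comm]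

lemma sigmaI_of_neg (i : Fin n) {k : ℤ} (hk : k < 0) : sigmaI n a i k = 0 :=
  sig_of_neg hk

lemma sigmaI_of_le (i : Fin n) {k : ℤ} (hk : (n : ℤ) ≤ k) : sigmaI n a i k = 0 :=
  sig_of_lt (by have := i.2; omega)

end Sigma

section Coefficients

variable {n : ℕ} (a : Fin n → ℝ)

/- `b̃_k` and `c̃_k` (at the point `t`) with the weights `ξᵢ Δᵢ^{-1/2}` replaced by arbitrary
weights `uᵢ`. -/

noncomputable def bCoeff (u : Fin n → ℝ) (k : ℕ) : ℝ :=
  (-1) ^ k * ∑ i, u i * sigmaI n a i (k - 1)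

noncomputable def cCoeff (u : Fin n → ℝ) (t : ℝ) (k : ℕ) : ℝ :=
  (-1) ^ (k + 1) / 2 *
    (∑ i, u i ^ 2 * sigmaI n a i (k - 1) +
      ∑ i, ∑ j ∈ univ.erase i,
        u i * u j * (sigmaIJ n a i j (k - 1) + t * sigmaIJ n a i j (k - 2)))

lemma bCoeff_zero (u : Fin n → ℝ) : bCoeff a u 0 = 0 := by
  simp [bCoeff, sigmaI_of_neg]

lemma bCoeff_succ_self (u : Fin n → ℝ) : bCoeff a u (n + 1) = 0 := by
  simp [bCoeff, sigmaI_of_le]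

lemma hasDerivAt_bCoeff {u : Fin n → ℝ → ℝ} {u' : Fin n → ℝ} {t : ℝ}
    (hu : ∀ i, HasDerivAt (u i) (u' i) t) (k : ℕ) :
    HasDerivAt (fun s => bCoeff a (fun i => u i s) k) (bCoeff a u' k) t :=
  (HasDerivAt.fun_sum fun i _ => (hu i).mul_const _).const_mul _

variable {a}

/- The relation `uᵢ = 2 (aᵢ - t) u'ᵢ` below is the one between `ξᵢ Δᵢ(t)^{-1/2}` and its
derivative. -/

lemma bCoeff_add_sub_bCoeff_succ {u u' : Fin n → ℝ} {t : ℝ}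
    (hu : ∀ i, u i = 2 * (a i - t) * u' i) (k : ℕ) :
    bCoeff a u k + 2 * t * bCoeff a u' k - 2 * bCoeff a u' (k + 1) =
      2 * (∑ i, u' i) * ((-1) ^ k * sigma n a k) := by
  simp only [bCoeff, Nat.cast_succ, add_sub_cancel_right, mul_sum, sum_mul,
    ← sum_add_distrib, ← sum_sub_distrib]
  refine sum_congr rfl fun i _ => ?_
  rw [sigma_eq_sigmaI_add a i, hu i, pow_succ]
  ring

lemma cCoeff_deriv_eq {u u' : Fin n → ℝ} {t : ℝ} (hu : ∀ i, u i = 2 * (a i - t) * u' i)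
    (k : ℕ) :
    (-1) ^ (k + 1) / 2 *
      (∑ i, 2 * u i * u' i * sigmaI n a i (k - 1) +
        ∑ i, ∑ j ∈ univ.erase i,
          ((u' i * u j + u i * u' j) * (sigmaIJ n a i j (k - 1) + t * sigmaIJ n a i j (k - 2)) +
            u i * u j * sigmaIJ n a i j (k - 2))) =
      -(∑ i, u' i) * bCoeff a u k := by
  have hpair : ∀ i, ∀ j ∈ univ.erase i,
      (u' i * u j + u i * u' j) * (sigmaIJ n a i j (k - 1) + t * sigmaIJ n a i j (k - 2)) +
          u i * u j * sigmaIJ n a i j (k - 2) =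
        u i * u' j * sigmaI n a i (k - 1) + u j * u' i * sigmaI n a j (k - 1) := by
    intro i j hj
    have hji := (mem_erase.1 hj).1
    rw [sigmaI_eq_sigmaIJ_add a hji, sigmaI_eq_sigmaIJ_add a hji.symm, sigmaIJ_comm a j i,
      sigmaIJ_comm a j i, show (k : ℤ) - 1 - 1 = k - 2 by ring]
    linear_combination (sigmaIJ n a i j (k - 2) / 2) * (u i * hu j + u j * hu i)
  have hswap : ∑ i, ∑ j ∈ univ.erase i, u j * u' i * sigmaI n a j (k - 1) =
      ∑ i, ∑ j ∈ univ.erase i, u i * u' j * sigmaI n a i (k - 1) :=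
    sum_comm' fun i j => by simp [and_comm, eq_comm]
  have hsplit : ∀ i, u i * sigmaI n a i (k - 1) * ∑ j, u' j =
      u i * u' i * sigmaI n a i (k - 1) +
        ∑ j ∈ univ.erase i, u i * u' j * sigmaI n a i (k - 1) := by
    intro i
    rw [← add_sum_erase _ _ (mem_univ i), mul_add, mul_sum]
    ring_nf
  have hrhs : -(∑ i, u' i) * bCoeff a u k =
      (-1) ^ (k + 1) * ∑ i, u i * sigmaI n a i (k - 1) * ∑ j, u' j := by
    rw [bCoeff, ← sum_mul, pow_succ]
    ring
  rw [sum_congr rfl fun i _ => sum_congr rfl (hpair i), hrhs, sum_congr rfl fun i _ => hsplit i]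
  have hdiag : ∑ i, 2 * u i * u' i * sigmaI n a i (k - 1) =
      2 * ∑ i, u i * u' i * sigmaI n a i (k - 1) := by
    rw [mul_sum]
    exact sum_congr rfl fun i _ => by ring
  simp only [sum_add_distrib, hswap, hdiag]
  ring

lemma hasDerivAt_cCoeff {u : Fin n → ℝ → ℝ} {u' : Fin n → ℝ} {t : ℝ}
    (hu : ∀ i, HasDerivAt (u i) (u' i) t) (hrel : ∀ i, u i t = 2 * (a i - t) * u' i) (k : ℕ) :
    HasDerivAt (fun s => cCoeff a (fun i => u i s) s k)
      (-(∑ i, u' i) * bCoeff a (fun i => u i t) k) t := by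
  rw [← cCoeff_deriv_eq hrel]
  have hdiag : ∀ i, HasDerivAt (fun s => u i s ^ 2 * sigmaI n a i (k - 1))
      (2 * u i t * u' i * sigmaI n a i (k - 1)) t := fun i =>
    (((hu i).pow 2).mul_const _).congr_deriv (by ring)
  have hoff : ∀ i j, HasDerivAt
      (fun s => u i s * u j s * (sigmaIJ n a i j (k - 1) + s * sigmaIJ n a i j (k - 2)))
      ((u' i * u j t + u i t * u' j) * (sigmaIJ n a i j (k - 1) + t * sigmaIJ n a i j (k - 2)) +
        u i t * u j t * sigmaIJ n a i j (k - 2)) t := fun i j =>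
    (((hu i).mul (hu j)).mul (((hasDerivAt_id t).mul_const _).const_add _)).congr_deriv
      (by simp only [id, Pi.mul_apply]; ring)
  exact ((HasDerivAt.fun_sum fun i _ => hdiag i).add
    (HasDerivAt.fun_sum fun i _ => HasDerivAt.fun_sum fun j _ => hoff i j)).const_mul _

end Coefficients

section Model

variable {n : ℕ} {a ε ξ : Fin n → ℝ}

noncomputable def xTerm (a ε ξ : Fin n → ℝ) (i : Fin n) (t : ℝ) : ℝ :=
  ξ i * (ε i * (t - a i)) ^ (-(1 / 2) : ℝ)

lemma sub_ne_zero_of_pos_mul_sub {e s c : ℝ} (h : 0 < e * (s - c)) : c - s ≠ 0 :=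
  sub_ne_zero.2 (sub_ne_zero.1 (right_ne_zero_of_mul h.ne')).symm

lemma hasDerivAt_xTerm (i : Fin n) {t : ℝ} (ht : 0 < ε i * (t - a i)) :
    HasDerivAt (xTerm a ε ξ i) (xTerm a ε ξ i t / (2 * (a i - t))) t := by
  have hε : ε i ≠ 0 := left_ne_zero_of_mul ht.ne'
  have hsub : t - a i ≠ 0 := right_ne_zero_of_mul ht.ne'
  have hsub' := sub_ne_zero_of_pos_mul_sub ht
  have h := ((Real.hasDerivAt_rpow_const (p := -(1 / 2)) (Or.inl ht.ne')).comp t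
    (((hasDerivAt_id t).sub_const (a i)).const_mul (ε i))).const_mul (ξ i)
  refine h.congr_deriv ?_
  rw [xTerm, Real.rpow_sub_one ht.ne']
  field_simp
  ring

lemma hasDerivAt_xfun {t : ℝ} (ht : ∀ i, 0 < ε i * (t - a i)) :
    HasDerivAt (xfun n a ε ξ) (∑ i, xTerm a ε ξ i t / (2 * (a i - t))) t :=
  HasDerivAt.fun_sum fun i _ => hasDerivAt_xTerm i (ht i)

lemma xTerm_eq_mul_div {t : ℝ} (ht : ∀ i, 0 < ε i * (t - a i)) (i : Fin n) :
    xTerm a ε ξ i t = 2 * (a i - t) * (xTerm a ε ξ i t / (2 * (a i - t))) :=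
  (mul_div_cancel₀ _ (mul_ne_zero two_ne_zero (sub_ne_zero_of_pos_mul_sub (ht i)))).symm

lemma btilc_eq_bCoeff {t : ℝ} (ht : ∀ i, 0 < ε i * (t - a i)) (k : ℕ) :
    btilc n a ε ξ k t = bCoeff a (fun i => xTerm a ε ξ i t) k := by
  refine congr_arg _ (sum_congr rfl fun i _ => ?_)
  simp only [xTerm]
  rw [Real.rpow_neg (ht i).le, div_eq_mul_inv]

lemma ctilc_eq_cCoeff {t : ℝ} (ht : ∀ i, 0 < ε i * (t - a i)) (k : ℕ) :
    ctilc n a ε ξ k t = cCoeff a (fun i => xTerm a ε ξ i t) t k := by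
  have hsq : ∀ i, (ε i * (t - a i)) ^ (-(1 / 2) : ℝ) * (ε i * (t - a i)) ^ (-(1 / 2) : ℝ) =
      (ε i * (t - a i))⁻¹ := fun i => by
    rw [← Real.rpow_add (ht i), ← Real.rpow_neg_one]
    norm_num
  refine congr_arg _ (congr_arg₂ _ (sum_congr rfl fun i _ => ?_)
    (sum_congr rfl fun i _ => sum_congr rfl fun j _ => ?_))
  · simp only [xTerm]
    rw [mul_pow, sq ((ε i * (t - a i)) ^ _), hsq, div_eq_mul_inv]
  · simp only [xTerm]
    rw [div_eq_mul_inv, Real.mul_rpow (ht i).le (ht j).le, mul_inv,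
      ← Real.rpow_neg (ht i).le, ← Real.rpow_neg (ht j).le]
    ring_nf

variable {A : ℝ} (hΔ : ∀ᶠ t in 𝓝 A, ∀ i, 0 < ε i * (t - a i))
include hΔ

lemma deriv_xfun_eventuallyEq :
    deriv (xfun n a ε ξ) =ᶠ[𝓝 A] fun t => ∑ i, xTerm a ε ξ i t / (2 * (a i - t)) :=
  hΔ.mono fun _ ht => (hasDerivAt_xfun ht).deriv

lemma differentiableAt_deriv_xfun : DifferentiableAt ℝ (deriv (xfun n a ε ξ)) A := by
  refine DifferentiableAt.congr_of_eventuallyEq ?_ (deriv_xfun_eventuallyEq hΔ)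
  exact DifferentiableAt.fun_sum fun i _ =>
    (hasDerivAt_xTerm i (hΔ.self_of_nhds i)).differentiableAt.div (by fun_prop)
      (mul_ne_zero two_ne_zero (sub_ne_zero_of_pos_mul_sub (hΔ.self_of_nhds i)))

lemma hasDerivAt_btilc (k : ℕ) :
    HasDerivAt (btilc n a ε ξ k) (bCoeff a (fun i => xTerm a ε ξ i A / (2 * (a i - A))) k) A :=
  (hasDerivAt_bCoeff a (fun i => hasDerivAt_xTerm i (hΔ.self_of_nhds i)) k).congr_of_eventuallyEq
    (hΔ.mono fun _ ht => btilc_eq_bCoeff ht k)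

lemma hasDerivAt_ctilc (k : ℕ) :
    HasDerivAt (ctilc n a ε ξ k) (-deriv (xfun n a ε ξ) A * btilc n a ε ξ k A) A := by
  have hA := hΔ.self_of_nhds
  rw [(hasDerivAt_xfun hA).deriv, btilc_eq_bCoeff hA]
  exact (hasDerivAt_cCoeff (fun i => hasDerivAt_xTerm i (hA i)) (xTerm_eq_mul_div hA) k)
    |>.congr_of_eventuallyEq (hΔ.mono fun _ ht => ctilc_eq_cCoeff ht k)

end Model

section Bracket

variable {n : ℕ} {a ε ξ : Fin n → ℝ} {A y pa py : ℝ}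

/-- `F` is differentiable at `(A, y, pa, py)` along `a`, `y` and `p_a`, and `{H, F} = v` there.
The `p_y`-direction does not enter because `∂H/∂y = 0`. -/
def HasHBracket (n : ℕ) (a ε ξ : Fin n → ℝ) (F : ℝ → ℝ → ℝ → ℝ → ℝ) (A y pa py v : ℝ) :
    Prop :=
  ∃ dA dy dpa : ℝ, HasDerivAt (fun t => F t y pa py) dA A ∧
    HasDerivAt (fun t => F A t pa py) dy y ∧ HasDerivAt (fun t => F A y t py) dpa pa ∧
    v = deriv (fun t => HF n a ε ξ t y pa py) A * dpa -
      2 * PiF n a ε ξ A y pa py * (A / deriv (xfun n a ε ξ) A) * dA - 2 * A * py * dy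

lemma hasDerivAt_PiF_pa :
    HasDerivAt (fun t => PiF n a ε ξ A y t py) (A / deriv (xfun n a ε ξ) A) pa :=
  ((hasDerivAt_id pa).const_mul A).div_const _ |>.congr_deriv (by simp)

lemma hasDerivAt_HF_pa :
    HasDerivAt (fun t => HF n a ε ξ A y t py)
      (2 * PiF n a ε ξ A y pa py * (A / deriv (xfun n a ε ξ) A)) pa :=
  (hasDerivAt_PiF_pa.pow 2).add_const _ |>.congr_deriv (by simp)

lemma hasDerivAt_HF_A {d : ℝ} (hPi : HasDerivAt (fun t => PiF n a ε ξ t y pa py) d A) :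
    HasDerivAt (fun t => HF n a ε ξ t y pa py) (2 * PiF n a ε ξ A y pa py * d + py ^ 2) A :=
  (hPi.pow 2).add ((hasDerivAt_id A).mul_const _) |>.congr_deriv (by simp)

lemma HasHBracket.pb_eq {F : ℝ → ℝ → ℝ → ℝ → ℝ} {v : ℝ}
    (h : HasHBracket n a ε ξ F A y pa py v) : pb (HF n a ε ξ) F A y pa py = v := by
  obtain ⟨dA, dy, dpa, hA, hy, hpa, rfl⟩ := h
  have hHy : deriv (fun t => HF n a ε ξ A t pa py) y = 0 :=
    (hasDerivAt_const y (HF n a ε ξ A y pa py)).deriv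
  have hHpy : HasDerivAt (fun t => HF n a ε ξ A y pa t) (2 * A * py) py :=
    ((hasDerivAt_pow 2 py).const_mul A).const_add (PiF n a ε ξ A y pa py ^ 2)
      |>.congr_deriv (by push_cast; ring)
  rw [pb, hA.deriv, hy.deriv, hpa.deriv, hHy, hHpy.deriv, hasDerivAt_HF_pa.deriv]
  ring

lemma HasHBracket.add {F G : ℝ → ℝ → ℝ → ℝ → ℝ} {v w : ℝ}
    (hF : HasHBracket n a ε ξ F A y pa py v) (hG : HasHBracket n a ε ξ G A y pa py w) :
    HasHBracket n a ε ξ (fun A y pa py => F A y pa py + G A y pa py) A y pa py (v + w) := by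
  obtain ⟨dA, dy, dpa, hA, hy, hpa, rfl⟩ := hF
  obtain ⟨eA, ey, epa, hA', hy', hpa', rfl⟩ := hG
  exact ⟨_, _, _, hA.add hA', hy.add hy', hpa.add hpa', by ring⟩

lemma HasHBracket.mul {F G : ℝ → ℝ → ℝ → ℝ → ℝ} {v w : ℝ}
    (hF : HasHBracket n a ε ξ F A y pa py v) (hG : HasHBracket n a ε ξ G A y pa py w) :
    HasHBracket n a ε ξ (fun A y pa py => F A y pa py * G A y pa py) A y pa py
      (v * G A y pa py + F A y pa py * w) := by
  obtain ⟨dA, dy, dpa, hA, hy, hpa, rfl⟩ := hF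
  obtain ⟨eA, ey, epa, hA', hy', hpa', rfl⟩ := hG
  exact ⟨_, _, _, hA.mul hA', hy.mul hy', hpa.mul hpa', by ring⟩

lemma HasHBracket.pow {F : ℝ → ℝ → ℝ → ℝ → ℝ} {v : ℝ}
    (hF : HasHBracket n a ε ξ F A y pa py v) (m : ℕ) :
    HasHBracket n a ε ξ (fun A y pa py => F A y pa py ^ m) A y pa py
      (m * F A y pa py ^ (m - 1) * v) := by
  obtain ⟨dA, dy, dpa, hA, hy, hpa, rfl⟩ := hF
  exact ⟨_, _, _, hA.pow m, hy.pow m, hpa.pow m, by ring⟩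

lemma HasHBracket.sum {ι : Type*} (s : Finset ι) {F : ι → ℝ → ℝ → ℝ → ℝ → ℝ} {v : ι → ℝ}
    (hF : ∀ i ∈ s, HasHBracket n a ε ξ (F i) A y pa py (v i)) :
    HasHBracket n a ε ξ (fun A y pa py => ∑ i ∈ s, F i A y pa py) A y pa py (∑ i ∈ s, v i) := by
  choose! dA dy dpa hA hy hpa hv using hF
  refine ⟨_, _, _, HasDerivAt.fun_sum hA, HasDerivAt.fun_sum hy, HasDerivAt.fun_sum hpa, ?_⟩
  rw [sum_congr rfl hv, sum_sub_distrib, sum_sub_distrib, mul_sum, mul_sum, mul_sum]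

lemma hasHBracket_of_fun_A {c : ℝ → ℝ} {c' : ℝ} (hc : HasDerivAt c c' A) :
    HasHBracket n a ε ξ (fun t _ _ _ => c t) A y pa py
      (-(2 * PiF n a ε ξ A y pa py * (A / deriv (xfun n a ε ξ) A)) * c') :=
  ⟨c', 0, 0, hc, hasDerivAt_const _ _, hasDerivAt_const _ _, by ring⟩

lemma hasHBracket_of_fun_y {f : ℝ → ℝ} {f' : ℝ} (hf : HasDerivAt f f' y) :
    HasHBracket n a ε ξ (fun _ t _ _ => f t) A y pa py (-(2 * A * py) * f') :=
  ⟨0, f', 0, hasDerivAt_const _ _, hf, hasDerivAt_const _ _, by ring⟩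

lemma hasHBracket_of_fun_py (f : ℝ → ℝ) :
    HasHBracket n a ε ξ (fun _ _ _ t => f t) A y pa py 0 :=
  ⟨0, 0, 0, hasDerivAt_const _ _, hasDerivAt_const _ _, hasDerivAt_const _ _, by ring⟩

variable (hW : DifferentiableAt ℝ (deriv (xfun n a ε ξ)) A)
  (hW0 : deriv (xfun n a ε ξ) A ≠ 0)
include hW hW0

lemma differentiableAt_PiF_A : DifferentiableAt ℝ (fun t => PiF n a ε ξ t y pa py) A :=
  (differentiableAt_id.mul_const pa).div hW hW0

lemma hasHBracket_HF : HasHBracket n a ε ξ (HF n a ε ξ) A y pa py 0 := by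
  have hHA := hasDerivAt_HF_A
    (differentiableAt_PiF_A (y := y) (pa := pa) (py := py) hW hW0).hasDerivAt
  exact ⟨_, 0, _, hHA, hasDerivAt_const y (HF n a ε ξ A y pa py), hasDerivAt_HF_pa,
    by rw [hHA.deriv]; ring⟩

lemma hasHBracket_PiF :
    HasHBracket n a ε ξ (PiF n a ε ξ) A y pa py (A / deriv (xfun n a ε ξ) A * py ^ 2) := by
  have hPi := (differentiableAt_PiF_A (y := y) (pa := pa) (py := py) hW hW0).hasDerivAt
  exact ⟨_, 0, _, hPi, hasDerivAt_const y (PiF n a ε ξ A y pa py), hasDerivAt_PiF_pa,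
    by rw [(hasDerivAt_HF_A hPi).deriv]; ring⟩

end Bracket

lemma sum_Icc_sub_eq_sum_range (n : ℕ) {f g : ℕ → ℝ} (hf : f 0 = 0) (hg : g (n + 1) = 0)
    (K p : ℝ) :
    ∑ k ∈ Icc 1 n,
        (f k * K ^ (n - k) * p ^ (2 * k + 1) - g k * K ^ (n + 1 - k) * p ^ (2 * k - 1)) =
      ∑ k ∈ range (n + 1), (f k - g (k + 1)) * K ^ (n - k) * p ^ (2 * k + 1) := by
  simp only [sub_mul, sum_sub_distrib]
  rw [← Ico_add_one_right_eq_Icc, sum_Ico_eq_sum_range, sum_Ico_eq_sum_range,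
    add_tsub_cancel_right, sum_range_succ' (fun k => f k * _ * _), sum_range_succ _ n, hf, hg]
  simp only [zero_mul, add_zero]
  congr 1 <;> refine sum_congr rfl fun k _ => ?_
  · rw [add_comm 1 k]
  · rw [add_comm 1 k, show n + 1 - (k + 1) = n - k by omega,
      show 2 * (k + 1) - 1 = 2 * k + 1 by omega]

section Integrals

variable {n : ℕ} {a ε ξ : Fin n → ℝ} {A y pa py : ℝ}

lemma hasHBracket_GF (hW : DifferentiableAt ℝ (deriv (xfun n a ε ξ)) A)
    (hW0 : deriv (xfun n a ε ξ) A ≠ 0) : HasHBracket n a ε ξ (GF n a ε ξ) A y pa py 0 := by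
  have h : HasHBracket n a ε ξ (GF n a ε ξ) A y pa py _ :=
    HasHBracket.sum (range (n + 1)) fun k _ =>
      ((hasHBracket_of_fun_A (hasDerivAt_const A ((-1 : ℝ) ^ k * sigma n a k))).mul
        ((hasHBracket_HF hW hW0).pow (n - k))).mul (hasHBracket_of_fun_py fun t => t ^ (2 * k))
  convert h using 1
  simp

variable (hΔ : ∀ᶠ t in 𝓝 A, ∀ i, 0 < ε i * (t - a i)) (hW0 : deriv (xfun n a ε ξ) A ≠ 0)
include hΔ hW0

lemma hasHBracket_Q1F :
    HasHBracket n a ε ξ (Q1F n a ε ξ) A y pa py (2 * A * py * GF n a ε ξ A y pa py) := by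
  have hW := differentiableAt_deriv_xfun (ξ := ξ) hΔ
  have hA := hΔ.self_of_nhds
  have h : HasHBracket n a ε ξ (Q1F n a ε ξ) A y pa py _ :=
    HasHBracket.sum (Icc 1 n) fun k _ =>
      (((hasHBracket_of_fun_A (hasDerivAt_btilc (ξ := ξ) hΔ k)).mul
        ((hasHBracket_HF hW hW0).pow (n - k))).mul (hasHBracket_PiF hW hW0)).mul
          (hasHBracket_of_fun_py fun t => t ^ (2 * k - 1))
  set u' := fun i => xTerm a ε ξ i A / (2 * (a i - A))
  have hrec : ∀ k, btilc n a ε ξ k A + 2 * A * bCoeff a u' k - 2 * bCoeff a u' (k + 1) =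
      2 * deriv (xfun n a ε ξ) A * ((-1) ^ k * sigma n a k) := fun k => by
    rw [btilc_eq_bCoeff hA, bCoeff_add_sub_bCoeff_succ (xTerm_eq_mul_div hA),
      (hasDerivAt_xfun hA).deriv]
  set w := deriv (xfun n a ε ξ) A
  set P := PiF n a ε ξ A y pa py
  set K := HF n a ε ξ A y pa py
  have hK : K = P ^ 2 + A * py ^ 2 := rfl
  convert h using 1
  symm
  calc _ = ∑ k ∈ Icc 1 n, A / w *
        ((btilc n a ε ξ k A + 2 * A * bCoeff a u' k) * K ^ (n - k) * py ^ (2 * k + 1) -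
          2 * bCoeff a u' k * K ^ (n + 1 - k) * py ^ (2 * k - 1)) := by
        refine sum_congr rfl fun k hk => ?_
        obtain ⟨hk1, hkn⟩ := mem_Icc.1 hk
        rw [show n + 1 - k = n - k + 1 by omega, show 2 * k + 1 = 2 * k - 1 + 2 by omega]
        linear_combination (2 * (A / w) * K ^ (n - k) * py ^ (2 * k - 1) * bCoeff a u' k) * hK
    _ = A / w * ∑ k ∈ range (n + 1), 2 * w * ((-1) ^ k * sigma n a k) * K ^ (n - k) *
          py ^ (2 * k + 1) := by
        rw [← mul_sum, sum_Icc_sub_eq_sum_range n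
          (by simp [btilc_eq_bCoeff hA, bCoeff_zero]) (by simp [bCoeff_succ_self])]
        simp only [hrec]
    _ = 2 * A * py * GF n a ε ξ A y pa py := by
        rw [GF, mul_sum, mul_sum]
        refine sum_congr rfl fun k _ => ?_
        field_simp
        ring

lemma hasHBracket_Q2F :
    HasHBracket n a ε ξ (Q2F n a ε ξ) A y pa py (2 * A * py * Q1F n a ε ξ A y pa py) := by
  have hW := differentiableAt_deriv_xfun (ξ := ξ) hΔ
  have h : HasHBracket n a ε ξ (Q2F n a ε ξ) A y pa py _ :=
    HasHBracket.sum (Icc 1 n) fun k _ =>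
      ((hasHBracket_of_fun_A (hasDerivAt_ctilc (ξ := ξ) hΔ k)).mul
        ((hasHBracket_HF hW hW0).pow (n - k))).mul (hasHBracket_of_fun_py fun t => t ^ (2 * k))
  convert h using 1
  rw [Q1F, mul_sum]
  refine sum_congr rfl fun k hk => ?_
  have hpow : py ^ (2 * k) = py * py ^ (2 * k - 1) := by
    rw [← pow_succ']
    congr 1
    have := (mem_Icc.1 hk).1
    omega
  rw [hpow]
  field_simp
  ring

end Integrals

theorem stmt19_general (n : ℕ) (a : Fin n → ℝ) (ε : Fin n → ℝ) (I : Set ℝ) (hIopen : IsOpen I)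
    (hΔ : ∀ i, ∀ t ∈ I, 0 < ε i * (t - a i)) (ξ : Fin n → ℝ)
    (hx' : ∀ t ∈ I, deriv (xfun n a ε ξ) t ≠ 0) :
    ∀ A ∈ I, ∀ y pa py : ℝ,
      pb (HF n a ε ξ) (fun _A _y _pa py => py) A y pa py = 0 ∧
      pb (HF n a ε ξ) (S1F n a ε ξ) A y pa py = 0 ∧
      pb (HF n a ε ξ) (S2F n a ε ξ) A y pa py = 0 := by
  intro A hA y pa py
  have hΔA : ∀ᶠ t in 𝓝 A, ∀ i, 0 < ε i * (t - a i) :=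
    eventually_of_mem (hIopen.mem_nhds hA) fun t ht i => hΔ i t ht
  have hQ1 := hasHBracket_Q1F (y := y) (pa := pa) (py := py) hΔA (hx' A hA)
  have hQ2 := hasHBracket_Q2F (y := y) (pa := pa) (py := py) hΔA (hx' A hA)
  have hG := hasHBracket_GF (y := y) (pa := pa) (py := py) (differentiableAt_deriv_xfun hΔA)
    (hx' A hA)
  have hY : HasHBracket n a ε ξ (fun _ t _ _ => t) A y pa py (-(2 * A * py) * 1) :=
    hasHBracket_of_fun_y (hasDerivAt_id' y)
  have hY2 : HasHBracket n a ε ξ (fun _ t _ _ => t ^ 2 / 2) A y pa py (-(2 * A * py) * y) :=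
    hasHBracket_of_fun_y (((hasDerivAt_pow 2 y).div_const 2).congr_deriv (by ring))
  refine ⟨(hasHBracket_of_fun_py fun t => t).pb_eq, ?_, ?_⟩
  · exact (hQ1.add (hY.mul hG)).pb_eq.trans (by ring)
  · exact ((hQ2.add (hY.mul hQ1)).add (hY2.mul hG)).pb_eq.trans (by ring)

/-- On `U = I × ℝ³`, the hamiltonian `H` Poisson-commutes with `p_y`,
`S₁` and `S₂`: `{H, p_y} = 0`, `{H, S₁} = 0` and `{H, S₂} = 0`. -/
theorem stmt19 (n : ℕ) (hn : 1 ≤ n) (a : Fin n → ℝ) (ha : Function.Injective a)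
    (ε : Fin n → ℝ) (hε : ∀ i, ε i = 1 ∨ ε i = -1)
    (I : Set ℝ) (hIopen : IsOpen I) (hIconn : I.OrdConnected)
    (hΔ : ∀ i, ∀ t ∈ I, 0 < ε i * (t - a i))
    (ξ : Fin n → ℝ)
    (hx' : ∀ t ∈ I, deriv (xfun n a ε ξ) t ≠ 0) :
    ∀ A ∈ I, ∀ y pa py : ℝ,
      pb (HF n a ε ξ) (fun _A _y _pa py => py) A y pa py = 0 ∧
      pb (HF n a ε ξ) (S1F n a ε ξ) A y pa py = 0 ∧
      pb (HF n a ε ξ) (S2F n a ε ξ) A y pa py = 0 :=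
  stmt19_general n a ε I hIopen hΔ ξ hx'
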